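/- Let μ and ν be Borel probability measures on ℝ and let 0 < a < b. Then | ∫_{(a,b]} log x dμ(x) − ∫_{(a,b]} log x dν(x) | ≤ 2(|log a| + |log b|) · ‖μ − ν‖_{[0,∞)}. -/

import Mathlib

open MeasureTheory ProbabilityTheory Matrix Filter
open scoped BigOperators ENNReal NNReal Topology

noncomputable section

namespace BandPaper

/-- The singular values of a square complex matrix: the square roots of the
eigenvalues of `Aᴴ * A` (counted with multiplicity). -/
def singularValues {N : ℕ} (A : Matrix (Fin N) (Fin N) ℂ) : Fin N → ℝ :=
  fun i => Real.sqrt ((Matrix.isHermitian_conjTranspose_mul_self A).eigenvalues i)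

/-- The least singular value of a square complex matrix. -/
def sigmaMin {N : ℕ} (A : Matrix (Fin N) (Fin N) ℂ) : ℝ :=
  ⨅ i, singularValues A i

/-- The operator (spectral) norm of a square complex matrix: its largest singular value. -/
def opNorm {N : ℕ} (A : Matrix (Fin N) (Fin N) ℂ) : ℝ :=
  ⨆ i, singularValues A i

/-- The `L∞ → L∞` operator norm of a matrix: its maximum absolute row sum. -/
def linftyNorm {n : Type} [Fintype n] (M : Matrix n n ℂ) : ℝ :=
  ⨆ i, ∑ k, ‖M i k‖

/-- The empirical spectral distribution of a square complex matrix: the uniform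
counting measure on the roots of its characteristic polynomial. -/
def ESD {N : ℕ} (A : Matrix (Fin N) (Fin N) ℂ) : Measure ℂ :=
  (N : ℝ≥0∞)⁻¹ • ((A.charpoly.roots).map Measure.dirac).sum

/-- The empirical distribution of the singular values of a square complex matrix. -/
def ESVD {N : ℕ} (A : Matrix (Fin N) (Fin N) ℂ) : Measure ℝ :=
  (N : ℝ≥0∞)⁻¹ • (∑ i, Measure.dirac (singularValues A i))

/-- The circular law: the uniform probability measure on the closed unit disk of `ℂ`. -/
def circularLaw : Measure ℂ :=
  (ENNReal.ofReal Real.pi)⁻¹ • (volume.restrict (Metric.closedBall (0 : ℂ) 1))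

/-- Kolmogorov distance on `[0, ∞)` between two measures on `ℝ`. -/
def kolDist (μ ν : Measure ℝ) : ℝ :=
  ⨆ x : {x : ℝ // 0 ≤ x}, |(μ (Set.Icc 0 x)).toReal - (ν (Set.Icc 0 x)).toReal|

/-- The random matrix `X = (b_{ij} x_{ij})` built from a deterministic variance
profile `b` and random entries `x`. -/
def bandMatrix {Ω : Type} {N : ℕ} (b : Fin N → Fin N → ℝ) (x : Fin N → Fin N → Ω → ℂ)
    (ω : Ω) : Matrix (Fin N) (Fin N) ℂ :=
  Matrix.of fun i j => (b i j : ℂ) * x i j ω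

/-- Conditions (1) (double stochasticity) and (2) (bandwidth) of Definition 1.1
on the variance profile `b`. -/
def VarProfile (N W : ℕ) (CW : ℝ) (b : Fin N → Fin N → ℝ) : Prop :=
  (∀ i, ∑ j, b i j ^ 2 = 1) ∧ (∀ j, ∑ i, b i j ^ 2 = 1) ∧ ∀ i j, b i j ^ 2 ≤ CW / W

/-- The variance profile matrix `S = (b_{ij}²)`, viewed as a complex matrix. -/
def profileMatrix {N : ℕ} (b : Fin N → Fin N → ℝ) : Matrix (Fin N) (Fin N) ℂ :=
  Matrix.of fun i j => ((b i j ^ 2 : ℝ) : ℂ)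

/-- The `2N × 2N` matrix `I - [[y₂ S, y₁ Sᵀ], [y₁ S, y₂ Sᵀ]]` of Definition 1.1 (3). -/
def blockMat {N : ℕ} (S : Matrix (Fin N) (Fin N) ℂ) (y₁ y₂ : ℂ) :
    Matrix (Fin N ⊕ Fin N) (Fin N ⊕ Fin N) ℂ :=
  1 - Matrix.fromBlocks (y₂ • S) (y₁ • Sᵀ) (y₁ • S) (y₂ • Sᵀ)

/-- Condition (3) (bounded inverse) of Definition 1.1, for a family of variance
profiles indexed by the dimension `N`, with constants independent of `N` and `W`. -/
def BoundedInverse (b : ∀ N : ℕ, Fin N → Fin N → ℝ) : Prop :=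
  ∀ z : ℂ, 0 < ‖z‖ → ‖z‖ < 1 →
    ∃ C cz : ℝ, 0 < C ∧ 0 < cz ∧ ∀ N : ℕ, ∀ y₁ y₂ : ℂ,
      ‖y₁ + 1 - ((‖z‖ ^ 2 : ℝ) : ℂ)‖ ≤ cz →
      ‖y₂ + ((‖z‖ ^ 2 : ℝ) : ℂ)‖ ≤ cz →
      IsUnit (blockMat (profileMatrix (b N)) y₁ y₂) ∧
      linftyNorm (blockMat (profileMatrix (b N)) y₁ y₂)⁻¹ ≤ C * Real.log N ^ C

/-- The entries `x i j` are (jointly) independent. -/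
def IndepEntries {Ω : Type} [MeasureSpace Ω] {N : ℕ} (x : Fin N → Fin N → Ω → ℂ) : Prop :=
  iIndepFun (fun p : Fin N × Fin N => x p.1 p.2) ℙ

/-- A complex random variable is measurable with mean `0` and variance `1`. -/
def MeanZeroVarOne {Ω : Type} [MeasureSpace Ω] (x : Ω → ℂ) : Prop :=
  Measurable x ∧ (∫ ω, x ω) = 0 ∧ (∫⁻ ω, ENNReal.ofReal (‖x ω‖ ^ 2)) = 1

/-- Uniformly bounded moments of all orders, with constants independent of `N`. -/
def UniformMoments (Ω : ℕ → Type) [∀ N, MeasureSpace (Ω N)]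
    (x : ∀ N, Fin N → Fin N → Ω N → ℂ) : Prop :=
  ∀ p : ℕ, ∃ μp : ℝ, ∀ N, ∀ i j,
    (∫⁻ ω, ENNReal.ofReal (‖x N i j ω‖ ^ p)) ≤ ENNReal.ofReal (μp ^ p)

/-- Uniformly subgaussian entries: `‖x_{ij}‖_{ψ₂} ≤ C`, i.e. `E exp(|x_{ij}|²/C²) ≤ 2`. -/
def SubgaussianFamily (Ω : ℕ → Type) [∀ N, MeasureSpace (Ω N)]
    (x : ∀ N, Fin N → Fin N → Ω N → ℂ) : Prop :=
  ∃ C : ℝ, 0 < C ∧ ∀ N, ∀ i j,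
    (∫⁻ ω, ENNReal.ofReal (Real.exp (‖x N i j ω‖ ^ 2 / C ^ 2))) ≤ 2

/-- A real-valued entry with density on `ℝ` bounded by `Cd`. -/
def RealEntryBoundedDensity {Ω : Type} [MeasureSpace Ω] (x : Ω → ℂ) (Cd : ℝ) : Prop :=
  (∀ ω, (x ω).im = 0) ∧ Measure.map (fun ω => (x ω).re) ℙ ≤ ENNReal.ofReal Cd • volume

/-- A complex-valued entry with independent real and imaginary parts, each with
density on `ℝ` bounded by `Cd`. -/
def ComplexEntryBoundedDensity {Ω : Type} [MeasureSpace Ω] (x : Ω → ℂ) (Cd : ℝ) : Prop :=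
  IndepFun (fun ω => (x ω).re) (fun ω => (x ω).im) ℙ ∧
  Measure.map (fun ω => (x ω).re) ℙ ≤ ENNReal.ofReal Cd • volume ∧
  Measure.map (fun ω => (x ω).im) ℙ ≤ ENNReal.ofReal Cd • volume

/-- The bounded density assumption of Theorem 1.6 for a family of entries. -/
def BoundedDensityFamily (Ω : ℕ → Type) [∀ N, MeasureSpace (Ω N)]
    (x : ∀ N, Fin N → Fin N → Ω N → ℂ) (Cd : ℝ) : Prop :=
  (∀ N, ∀ i j, RealEntryBoundedDensity (x N i j) Cd) ∨
  (∀ N, ∀ i j, ComplexEntryBoundedDensity (x N i j) Cd)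

/-- Graph distance on `ℤ/NZ` between (representatives of) two residues. -/
def cycDist (N a b : ℕ) : ℕ :=
  min (max a b - min a b) (N - (max a b - min a b))

/-- The block band variance profile of Example 1.2 (with `N = W·L`):
`b_{ij} = (3W)^{-1/2}·1(|⌈i/W⌉ − ⌈j/W⌉|_L ∈ {0,1})`, written with `0`-based indices. -/
def blockBandProfile (N W L : ℕ) : Fin N → Fin N → ℝ :=
  fun i j => if cycDist L (i.val / W) (j.val / W) ≤ 1 then 1 / Real.sqrt (3 * W) else 0

/-- The self-consistent (cubic) equation `1/m = -w(1+m) + |z|²/(1+m)` at `w = iη`,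
together with `Im m > 0`; its unique such solution is `m_c(iη, z)`. -/
def SelfConsistent (z : ℂ) (η : ℝ) (m : ℂ) : Prop :=
  0 < m.im ∧ m⁻¹ = -(Complex.I * η) * (1 + m) + ((‖z‖ ^ 2 : ℝ) : ℂ) / (1 + m)

/-- The resolvent `G(w) = ((X - zI)ᴴ(X - zI) - w)⁻¹`. -/
def resG {N : ℕ} (X : Matrix (Fin N) (Fin N) ℂ) (z w : ℂ) : Matrix (Fin N) (Fin N) ℂ :=
  ((X - z • 1)ᴴ * (X - z • 1) - w • 1)⁻¹

/-- The resolvent `𝒢(w) = ((X - zI)(X - zI)ᴴ - w)⁻¹`. -/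
def resGc {N : ℕ} (X : Matrix (Fin N) (Fin N) ℂ) (z w : ℂ) : Matrix (Fin N) (Fin N) ℂ :=
  ((X - z • 1) * (X - z • 1)ᴴ - w • 1)⁻¹

/-- The control parameter `Λ`: the maximum of the diagonal error
`max_i |G_{ii} - m| + max_i |𝒢_{ii} - m|` and the off-diagonal error
`max_{i≠j} |G_{ij}| + max_{i≠j} |𝒢_{ij}|`. -/
def Lambda {N : ℕ} (G Gc : Matrix (Fin N) (Fin N) ℂ) (m : ℂ) : ℝ :=
  max ((⨆ i, ‖G i i - m‖) + (⨆ i, ‖Gc i i - m‖))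
      ((⨆ p : {p : Fin N × Fin N // p.1 ≠ p.2}, ‖G p.val.1 p.val.2‖) +
       (⨆ p : {p : Fin N × Fin N // p.1 ≠ p.2}, ‖Gc p.val.1 p.val.2‖))

/-- The Euclidean norm of the restriction of `v : ℂ^N` to the `k`-th (0-based)
block of consecutive coordinates of length `W₀`. -/
def blockNorm {N : ℕ} (W₀ k : ℕ) (v : Fin N → ℂ) : ℝ :=
  Real.sqrt (∑ i ∈ Finset.univ.filter (fun i : Fin N => i.val / W₀ = k),
    ‖v i‖ ^ 2)

end BandPaper

open BandPaper

/-!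
Writing `F(x) = μ[0, x]`, integration by parts gives
`∫_{(a,b]} log dμ = log b · F(b) - log a · F(a) - ∫_{log a}^{log b} F(eˢ) ds`,
which follows from the layer-cake formula applied to `log b - log x` on `(a, b]`.
The three terms change by at most `|log b|`, `|log a|` and `log b - log a ≤ |log a| + |log b|`
times `‖μ - ν‖_{[0,∞)}` when `μ` is replaced by `ν`.
-/

open Set Real

section LogIntegral

variable {μ : Measure ℝ} [IsFiniteMeasure μ] {a b : ℝ}

lemma measureReal_Ioc_eq_sub (ha : 0 ≤ a) (hab : a ≤ b) :
    μ.real (Ioc a b) = μ.real (Icc 0 b) - μ.real (Icc 0 a) := by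
  rw [← Icc_union_Ioc_eq_Icc ha hab,
    measureReal_union ((Iic_disjoint_Ioc le_rfl).mono_left Icc_subset_Iic_self)
      measurableSet_Ioc]
  ring

variable (μ) in
lemma monotone_measureReal_Icc_exp : Monotone fun s => μ.real (Icc 0 (exp s)) :=
  fun _ _ hst => measureReal_mono (Icc_subset_Icc_right (exp_le_exp.2 hst))

lemma integrableOn_log_Ioc (ha : 0 < a) : IntegrableOn log (Ioc a b) μ :=
  ((continuousOn_log.mono fun _ hx => (ha.trans_le hx.1).ne').integrableOn_Icc).mono_set
    Ioc_subset_Icc_self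

lemma setIntegral_Ioc_log_sub_log_eq (ha : 0 < a) (hab : a ≤ b) :
    ∫ x in Ioc a b, (log b - log x) ∂μ = ∫ s in log a..log b, μ.real (Ioc a (exp s)) := by
  have hM : 0 ≤ log b - log a := sub_nonneg.2 (log_le_log ha hab)
  have f_nn : 0 ≤ᵐ[μ.restrict (Ioc a b)] fun x => log b - log x := by
    filter_upwards [ae_restrict_mem measurableSet_Ioc] with x hx
    exact sub_nonneg.2 (log_le_log (ha.trans hx.1) hx.2)
  have f_bdd : (fun x => log b - log x) ≤ᵐ[μ.restrict (Ioc a b)] fun _ => log b - log a := by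
    filter_upwards [ae_restrict_mem measurableSet_Ioc] with x hx
    exact sub_le_sub_left (log_le_log ha hx.1.le) _
  have f_int : IntegrableOn (fun x => log b - log x) (Ioc a b) μ :=
    IntegrableOn.sub integrableOn_const (integrableOn_log_Ioc ha)
  rw [f_int.integral_eq_integral_Ioc_meas_le f_nn f_bdd, ← intervalIntegral.integral_of_le hM]
  have hsub := intervalIntegral.integral_comp_sub_left (fun s => μ.real (Ioc a (exp s)))
    (a := 0) (b := log b - log a) (log b)
  rw [sub_sub_cancel, sub_zero] at hsub
  rw [← hsub]
  refine intervalIntegral.integral_congr fun t ht => ?_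
  rw [uIcc_of_le hM] at ht
  have hmeas : MeasurableSet {x | t ≤ log b - log x} :=
    measurableSet_le measurable_const (by fun_prop)
  rw [measureReal_restrict_apply hmeas]
  congr 1
  ext x
  simp only [mem_inter_iff, mem_ofPred_eq, mem_Ioc]
  constructor
  · rintro ⟨hxt, hax, -⟩
    exact ⟨hax, (log_le_iff_le_exp (ha.trans hax)).1 (by linarith)⟩
  · rintro ⟨hax, hxe⟩
    have hlog : log x ≤ log b - t := (log_le_iff_le_exp (ha.trans hax)).2 hxe
    refine ⟨by linarith, hax, hxe.trans ?_⟩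
    exact (exp_le_exp.2 (by linarith [ht.1])).trans_eq (exp_log (ha.trans_le hab))

lemma setIntegral_Ioc_log_eq (ha : 0 < a) (hab : a ≤ b) :
    ∫ x in Ioc a b, log x ∂μ = log b * μ.real (Icc 0 b) - log a * μ.real (Icc 0 a)
      - ∫ s in log a..log b, μ.real (Icc 0 (exp s)) := by
  have hlog : IntegrableOn (fun x => log b - log x) (Ioc a b) μ :=
    IntegrableOn.sub integrableOn_const (integrableOn_log_Ioc ha)
  have hcdf : ∫ s in log a..log b, μ.real (Ioc a (exp s))
      = (∫ s in log a..log b, μ.real (Icc 0 (exp s))) - (log b - log a) * μ.real (Icc 0 a) := by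
    rw [← smul_eq_mul, ← intervalIntegral.integral_const, ← intervalIntegral.integral_sub
      (monotone_measureReal_Icc_exp μ).intervalIntegrable intervalIntegrable_const]
    refine intervalIntegral.integral_congr fun s hs => ?_
    rw [uIcc_of_le (log_le_log ha hab)] at hs
    exact measureReal_Ioc_eq_sub ha.le ((log_le_iff_le_exp ha).1 hs.1)
  calc ∫ x in Ioc a b, log x ∂μ = ∫ x in Ioc a b, (log b - (log b - log x)) ∂μ := by simp
    _ = log b * μ.real (Ioc a b) - ∫ s in log a..log b, μ.real (Ioc a (exp s)) := by
      rw [integral_sub (integrable_const _) hlog,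
        setIntegral_Ioc_log_sub_log_eq ha hab, setIntegral_const, smul_eq_mul, mul_comm]
    _ = _ := by
      rw [hcdf, measureReal_Ioc_eq_sub ha.le hab]
      ring

end LogIntegral

section KolmogorovDistance

variable (μ ν : Measure ℝ)

lemma kolDist_nonneg : 0 ≤ kolDist μ ν :=
  Real.iSup_nonneg fun _ => abs_nonneg _

lemma abs_measureReal_Icc_sub_le_kolDist [IsFiniteMeasure μ] [IsFiniteMeasure ν] {x : ℝ}
    (hx : 0 ≤ x) : |μ.real (Icc 0 x) - ν.real (Icc 0 x)| ≤ kolDist μ ν := by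
  refine le_ciSup (f := fun y : {y : ℝ // 0 ≤ y} => |μ.real (Icc 0 y.1) - ν.real (Icc 0 y.1)|)
    ⟨μ.real univ + ν.real univ, ?_⟩ ⟨x, hx⟩
  rintro _ ⟨y, rfl⟩
  have hμ : μ.real (Icc 0 y.1) ≤ μ.real univ := measureReal_mono (subset_univ _)
  have hν : ν.real (Icc 0 y.1) ≤ ν.real univ := measureReal_mono (subset_univ _)
  have hμ₀ : 0 ≤ μ.real (Icc 0 y.1) := measureReal_nonneg
  have hν₀ : 0 ≤ ν.real (Icc 0 y.1) := measureReal_nonneg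
  exact abs_le.2 ⟨by linarith, by linarith⟩

lemma abs_intervalIntegral_measureReal_Icc_exp_sub_le [IsFiniteMeasure μ] [IsFiniteMeasure ν]
    (l u : ℝ) :
    |(∫ s in l..u, μ.real (Icc 0 (exp s))) - ∫ s in l..u, ν.real (Icc 0 (exp s))|
      ≤ kolDist μ ν * |u - l| := by
  rw [← intervalIntegral.integral_sub (monotone_measureReal_Icc_exp μ).intervalIntegrable
    (monotone_measureReal_Icc_exp ν).intervalIntegrable, ← Real.norm_eq_abs]
  refine intervalIntegral.norm_integral_le_of_norm_le_const fun s _ => ?_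
  rw [Real.norm_eq_abs]
  exact abs_measureReal_Icc_sub_le_kolDist μ ν (exp_pos s).le

end KolmogorovDistance

/-- comparison of logarithmic integrals via the Kolmogorov distance
(Lemma 2.8, from Jain–Jana–Luh–O'Rourke). -/
theorem log_integral_kolmogorov_bound
    (μ ν : Measure ℝ) [IsProbabilityMeasure μ] [IsProbabilityMeasure ν]
    (a b : ℝ) (ha : 0 < a) (hab : a < b) :
    |(∫ x in Set.Ioc a b, Real.log x ∂μ) - ∫ x in Set.Ioc a b, Real.log x ∂ν| ≤
      2 * (|Real.log a| + |Real.log b|) * kolDist μ ν := by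
  rw [setIntegral_Ioc_log_eq ha hab.le, setIntegral_Ioc_log_eq ha hab.le]
  have hFb := abs_measureReal_Icc_sub_le_kolDist μ ν (ha.trans hab).le
  have hFa := abs_measureReal_Icc_sub_le_kolDist μ ν ha.le
  have hI := abs_intervalIntegral_measureReal_Icc_exp_sub_le μ ν (log a) (log b)
  have hK := kolDist_nonneg μ ν
  have hM : |log b - log a| ≤ |log a| + |log b| := (abs_sub _ _).trans_eq (add_comm _ _)
  set K := kolDist μ ν
  set Iμ := ∫ s in log a..log b, μ.real (Icc 0 (exp s))
  set Iν := ∫ s in log a..log b, ν.real (Icc 0 (exp s))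
  calc _ = |log b * (μ.real (Icc 0 b) - ν.real (Icc 0 b))
          - log a * (μ.real (Icc 0 a) - ν.real (Icc 0 a)) - (Iμ - Iν)| := by
        congr 1; ring
    _ ≤ |log b| * K + |log a| * K + K * (|log a| + |log b|) := by
      refine (abs_sub _ _).trans (add_le_add ((abs_sub _ _).trans (add_le_add ?_ ?_)) ?_)
      · rw [abs_mul]; gcongr
      · rw [abs_mul]; gcongr
      · exact hI.trans (mul_le_mul_of_nonneg_left hM hK)
    _ = 2 * (|log a| + |log b|) * K := by ring
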